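/- arXiv:2503.07769 — 4 statements merged into one kernel-verified Lean document; each statement's English description precedes it below -/
import Mathlib

section
/- For all integers d ≥ 0, n ≥ 2 and every real ε > 0, the binomial coefficient B(n,d) = C(d + ⌈log₂ n⌉, d) satisfies B(n,d) ≤ n^ε · 2^(d·(1 + log₂(1 + 1/ε))). (This is the precise form of the bound B(n,d) = n^ε 2^{O(d)}.) -/
open Real

private lemma choose_mul_le_aux (a b : ℕ) (x : ℝ) (hx : 0 ≤ x) :
    (Nat.choose (a + b) b : ℝ) * x ^ b ≤ (1 + x) ^ (a + b) := by
  rw [add_comm 1 x, add_pow]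
  have hb : b ∈ Finset.range (a + b + 1) := by simp
  calc (Nat.choose (a + b) b : ℝ) * x ^ b
      = x ^ b * 1 ^ (a + b - b) * (Nat.choose (a + b) b : ℝ) := by
        rw [one_pow]; ring
    _ ≤ _ := Finset.single_le_sum
        (f := fun k => x ^ k * 1 ^ (a + b - k) * (Nat.choose (a + b) k : ℝ))
        (fun i _ => by positivity) hb

private lemma choose_le_mul_pow (a b : ℕ) (x : ℝ) (hx : 0 < x) :
    (Nat.choose (a + b) b : ℝ) ≤ (1 + x) ^ a * ((1 + x) / x) ^ b := by
  have h := choose_mul_le_aux a b x hx.le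
  have hxb : (0:ℝ) < x ^ b := pow_pos hx b
  rw [div_pow, mul_div_assoc', le_div_iff₀ hxb, ← pow_add]
  linarith [h]

private lemma two_rpow_neg_le {ε : ℝ} (h0 : 0 ≤ ε) (h1 : ε ≤ 1) :
    (2 : ℝ) ^ (-ε) ≤ 1 - ε / 2 := by
  have h := convexOn_exp.2 (Set.mem_univ (0 : ℝ)) (Set.mem_univ (-Real.log 2))
    (by linarith : (0:ℝ) ≤ 1 - ε) h0 (by ring)
  simp only [smul_eq_mul, mul_zero, zero_add, Real.exp_zero, mul_one] at h
  rw [Real.exp_neg, Real.exp_log (by norm_num)] at h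
  rw [Real.rpow_def_of_pos (by norm_num)]
  calc Real.exp (Real.log 2 * -ε) = Real.exp (ε * -Real.log 2) := by ring_nf
    _ ≤ (1 - ε) + ε * (2:ℝ)⁻¹ := h
    _ = 1 - ε / 2 := by ring

set_option maxHeartbeats 1000000 in
/-- For all integers `d ≥ 0`, `n ≥ 2` and every real `ε > 0`, the binomial coefficient
`B(n,d) = C(d + ⌈log₂ n⌉, d)` satisfies
`B(n,d) ≤ n^ε · 2^(d·(1 + log₂(1 + 1/ε)))`.
This is the precise form of the bound `B(n,d) = n^ε 2^{O(d)}`. -/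
theorem B_le_rpow (n d : ℕ) (hn : 2 ≤ n) (ε : ℝ) (hε : 0 < ε) :
    (Nat.choose (d + Nat.clog 2 n) d : ℝ)
      ≤ (n : ℝ) ^ ε * (2 : ℝ) ^ ((d : ℝ) * (1 + Real.logb 2 (1 + 1/ε))) := by
  set L := Nat.clog 2 n with hLdef
  have hn1 : (1:ℝ) ≤ (n:ℝ) := by exact_mod_cast Nat.one_le_of_lt hn
  have hn2 : (2:ℝ) ≤ (n:ℝ) := by exact_mod_cast hn
  have hnpos : (0:ℝ) < (n:ℝ) := by linarith
  have hεinv : (0:ℝ) < 1 + 1/ε := by positivity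
  have hS : (2 : ℝ) ^ ((d : ℝ) * (1 + Real.logb 2 (1 + 1/ε)))
      = (2 * (1 + 1/ε)) ^ d := by
    rw [mul_comm, Real.rpow_mul (by norm_num), Real.rpow_natCast]
    congr 1
    rw [Real.rpow_add (by norm_num), Real.rpow_one,
      Real.rpow_logb (by norm_num) (by norm_num) hεinv]
  rw [hS]
  set S : ℝ := 2 * (1 + 1/ε) with hSdef
  have hnε1 : (1:ℝ) ≤ (n:ℝ) ^ ε := Real.one_le_rpow hn1 hε.le
  have hdL : d + L = L + d := by omega
  have hL1 : 1 ≤ L := Nat.clog_pos one_lt_two hn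
  have hpred : (2:ℕ) ^ (L - 1) < n := Nat.pow_pred_clog_lt_self one_lt_two (by omega)
  have hpredR : (2:ℝ) ^ (L - 1 : ℕ) ≤ (n:ℝ) := by exact_mod_cast hpred.le
  rcases Nat.eq_zero_or_pos d with hd0 | hdpos
  · subst hd0
    simp only [Nat.choose_zero_right, Nat.cast_one, pow_zero, mul_one]
    exact hnε1
  obtain ⟨e, rfl⟩ : ∃ e, d = e + 1 := ⟨d - 1, by omega⟩
  set d := e + 1
  rcases le_or_gt ε 1 with hε1 | hε1
  · -- small ε case
    set t : ℝ := (2:ℝ) ^ ε - 1 with htdef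
    have h2ε : (1:ℝ) < (2:ℝ) ^ ε := by
      have := Real.one_lt_rpow_iff_of_pos (x := 2) (by norm_num) (y := ε)
      exact this.mpr (Or.inl ⟨by norm_num, hε⟩)
    have ht : 0 < t := by rw [htdef]; linarith
    have h1t : 1 + t = (2:ℝ) ^ ε := by rw [htdef]; ring
    have h2le : (2:ℝ) ^ ε ≤ 2 := by
      calc (2:ℝ) ^ ε ≤ (2:ℝ) ^ (1:ℝ) :=
        Real.rpow_le_rpow_of_exponent_le (by norm_num) hε1
      _ = 2 := Real.rpow_one 2
    have ht1 : t ≤ 1 := by rw [htdef]; linarith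
    have hlog2 : (0.6931471803:ℝ) < Real.log 2 := Real.log_two_gt_d9
    have htlow : ε / 2 ≤ t := by
      have hexp : ε * Real.log 2 + 1 ≤ Real.exp (ε * Real.log 2) :=
        Real.add_one_le_exp _
      have heq : Real.exp (ε * Real.log 2) = (2:ℝ) ^ ε := by
        rw [Real.rpow_def_of_pos (by norm_num), mul_comm]
      rw [heq] at hexp
      nlinarith
    have hconv : ε ≤ (2 - ε) * t := by
      have h := two_rpow_neg_le hε.le hε1
      rw [Real.rpow_neg (by norm_num)] at h
      have h2pos : (0:ℝ) < (2:ℝ) ^ ε := by linarith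
      have : 1 ≤ (1 - ε / 2) * (2:ℝ) ^ ε := by
        have := mul_le_mul_of_nonneg_right h h2pos.le
        rwa [inv_mul_cancel₀ (ne_of_gt h2pos)] at this
      nlinarith
    have key := choose_le_mul_pow L d t ht
    rw [h1t] at key
    rw [hdL]
    set R : ℝ := (2:ℝ) ^ ε / t with hRdef
    have hRpos : 0 < R := div_pos (by linarith) ht
    have h2tε : 1 ≤ 2 * t / ε := (one_le_div hε).mpr (by linarith)
    have hQ : R ≤ S := by
      rw [hRdef, hSdef, div_le_iff₀ ht]
      have hexp1 : 2 * (1 + 1/ε) * t = 2 * t + 2 * t / ε := by field_simp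
      rw [hexp1, ← h1t]
      linarith
    have hP : (2:ℝ) ^ ε * R ≤ S := by
      have hrw : (2:ℝ) ^ ε * R = (1 + t) * (1 + t) / t := by
        rw [hRdef, ← h1t]; ring
      rw [hrw, div_le_iff₀ ht]
      -- suffices after multiplying by ε
      have hmul : ε * ((1 + t) * (1 + t)) ≤ ε * (S * t) := by
        have hinv : ε * (1/ε) = 1 := by field_simp
        have hSt : ε * (S * t) = (2 * ε + 2) * t := by
          calc ε * (S * t) = 2 * (ε + ε * (1/ε)) * t := by rw [hSdef]; ring
            _ = (2 * ε + 2) * t := by rw [hinv]; ring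
        rw [hSt]
        nlinarith [hconv, mul_nonneg hε.le (mul_nonneg ht.le (sub_nonneg.mpr ht1))]
      exact le_of_mul_le_mul_left hmul hε
    have hpow : ((2:ℝ) ^ ε) ^ L ≤ (2:ℝ) ^ ε * (n:ℝ) ^ ε := by
      have hL' : L = (L - 1) + 1 := by omega
      have h1 : ((2:ℝ) ^ ε) ^ L = (2:ℝ)^ε * ((2:ℝ) ^ ε) ^ (L - 1) := by
        conv_lhs => rw [hL']
        rw [pow_succ]; ring
      rw [h1]
      have h2 : ((2:ℝ) ^ ε) ^ (L - 1) ≤ (n:ℝ) ^ ε := by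
        rw [← Real.rpow_natCast ((2:ℝ)^ε) (L-1), ← Real.rpow_mul (by norm_num),
          mul_comm, Real.rpow_mul (by norm_num), Real.rpow_natCast]
        exact Real.rpow_le_rpow (by positivity) hpredR hε.le
      exact mul_le_mul_of_nonneg_left h2 (by positivity)
    calc (Nat.choose (L + d) d : ℝ) ≤ ((2:ℝ)^ε) ^ L * R ^ d := key
      _ ≤ ((2:ℝ)^ε * (n:ℝ)^ε) * R ^ d := by
          apply mul_le_mul_of_nonneg_right hpow (by positivity)
      _ = (n:ℝ)^ε * ((2:ℝ)^ε * R ^ d) := by ring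
      _ ≤ (n:ℝ)^ε * S ^ d := by
          apply mul_le_mul_of_nonneg_left _ (by positivity)
          have hrw : (2:ℝ)^ε * R ^ d = ((2:ℝ)^ε * R) * R ^ e := by rw [pow_succ]; ring
          rw [hrw, pow_succ, mul_comm (S^e) S]
          exact mul_le_mul hP (pow_le_pow_left₀ hRpos.le hQ e) (by positivity) (by linarith)
  · -- large ε case
    have key := choose_le_mul_pow L d 1 one_pos
    norm_num at key
    rw [hdL]
    have h2L : (2:ℝ) ^ L ≤ 2 * (n:ℝ) := by
      have hL' : L = (L - 1) + 1 := by omega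
      conv_lhs => rw [hL']
      rw [pow_succ]
      nlinarith [hpredR]
    have hsplit : (2:ℝ) ^ ε = 2 * (2:ℝ) ^ (ε - 1) := by
      have h : (2:ℝ)^(1:ℝ) * (2:ℝ)^(ε-1) = (2:ℝ)^ε := by
        rw [← Real.rpow_add (by norm_num : (0:ℝ) < 2)]; ring_nf
      rw [← h, Real.rpow_one]
    have hlog2 : (0.6931471803:ℝ) < Real.log 2 := Real.log_two_gt_d9
    have h2e1pos : (0:ℝ) < (2:ℝ)^(ε-1) := Real.rpow_pos_of_pos (by norm_num) _
    have h2ε : 1 + ε ≤ (2:ℝ) ^ ε := by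
      have hexp : (ε-1) * Real.log 2 + 1 ≤ Real.exp ((ε-1) * Real.log 2) :=
        Real.add_one_le_exp _
      have he : Real.exp ((ε-1) * Real.log 2) = (2:ℝ) ^ (ε - 1) := by
        rw [Real.rpow_def_of_pos (by norm_num), mul_comm]
      rw [he] at hexp
      rw [hsplit]
      have hm : 0 ≤ (ε - 1) * (2 * Real.log 2 - 1) :=
        mul_nonneg (by linarith) (by linarith)
      linarith [hexp, hm]
    have hnε : (n:ℝ) * (2:ℝ)^(ε-1) ≤ (n:ℝ) ^ ε := by
      have h1 : (n:ℝ) ^ ε = (n:ℝ) ^ (1:ℝ) * (n:ℝ) ^ (ε - 1) := by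
        rw [← Real.rpow_add hnpos]; norm_num
      rw [h1, Real.rpow_one]
      apply mul_le_mul_of_nonneg_left _ (by linarith)
      exact Real.rpow_le_rpow (by norm_num) hn2 (by linarith)
    have hcore : 2 ≤ (2:ℝ)^(ε-1) * (1 + 1/ε) := by
      have h4 : 2 * ε ≤ (2:ℝ)^(ε-1) * (ε + 1) := by
        have : 4 * ε ≤ (2:ℝ)^ε * (ε + 1) := by
          have := mul_le_mul_of_nonneg_right h2ε (show (0:ℝ) ≤ ε + 1 by linarith)
          nlinarith [sq_nonneg (ε - 1)]
        rw [hsplit] at this; linarith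
      have heq : (2:ℝ)^(ε-1) * (1 + 1/ε) * ε = (2:ℝ)^(ε-1) * (ε + 1) := by
        field_simp
      have h2e : 2 * ε ≤ (2:ℝ)^(ε-1) * (1 + 1/ε) * ε := by rw [heq]; exact h4
      exact le_of_mul_le_mul_right h2e hε
    have hone : (1:ℝ) ≤ 1 + 1/ε := by
      have := one_div_pos.mpr hε; linarith
    have hpowd : (1 + 1/ε) ≤ (1 + 1/ε) ^ d := le_self_pow₀ hone (by omega)
    have hstep : 2 * (n:ℝ) ≤ (n:ℝ)^ε * (1 + 1/ε) ^ d := by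
      calc 2 * (n:ℝ) = (n:ℝ) * 2 := by ring
        _ ≤ (n:ℝ) * ((2:ℝ)^(ε-1) * (1 + 1/ε)) := by
            exact mul_le_mul_of_nonneg_left hcore (by linarith)
        _ = ((n:ℝ) * (2:ℝ)^(ε-1)) * (1 + 1/ε) := by ring
        _ ≤ (n:ℝ)^ε * (1 + 1/ε) ^ d :=
            mul_le_mul hnε hpowd (by positivity) (Real.rpow_nonneg hnpos.le ε)
    calc (Nat.choose (L + d) d : ℝ) ≤ 2 ^ L * 2 ^ d := key
      _ ≤ (2 * (n:ℝ)) * 2 ^ d := mul_le_mul_of_nonneg_right h2L (by positivity)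
      _ ≤ ((n:ℝ)^ε * (1 + 1/ε) ^ d) * 2 ^ d := mul_le_mul_of_nonneg_right hstep (by positivity)
      _ = (n:ℝ)^ε * S ^ d := by rw [hSdef, mul_pow]; ring
end

section
/- Let G be a connected weighted graph with nonnegative edge lengths and 𝒢 its continuous graph. For edges aa' and bb' of G, the maximum over points p on edge aa' and q on edge bb' of the continuous distance d_𝒢(p,q) equals ℓ(W(aa',bb'))/2, where W(aa',bb') is a shortest closed walk passing through all interior points of aa' and bb'. -/
open SimpleGraph

variable {V : Type*}

/-- Length of a walk in a weighted graph: the sum of the lengths of its edges,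
counted with multiplicity. -/
noncomputable def walkLen (ℓ : V → V → ℝ) {G : SimpleGraph V} {a b : V} (w : G.Walk a b) : ℝ :=
  (w.darts.map (fun d => ℓ d.toProd.1 d.toProd.2)).sum

/-- Shortest-path distance in the weighted graph: infimum of walk lengths. -/
noncomputable def gdist (G : SimpleGraph V) (ℓ : V → V → ℝ) (a b : V) : ℝ :=
  sInf {x | ∃ w : G.Walk a b, walkLen ℓ w = x}

/-- Endpoint (`u` or `v`) of the edge carrying a point `(u, v, lam)` of the continuous graph. -/
def ept (p : V × V × ℝ) : Bool → V := fun i => if i then p.2.1 else p.1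

/-- Offset of a point `(u, v, lam)` of the continuous graph to the chosen endpoint of its edge. -/
def off (ℓ : V → V → ℝ) (p : V × V × ℝ) : Bool → ℝ :=
  fun i => if i then ℓ p.1 p.2.1 - p.2.2 else p.2.2

/-- Geodesic distance between two points of the continuous graph `𝒢` of `G`:
a point `(u, v, lam)` lies on edge `uv` at distance `lam` along the edge from `u`.
It is the infimum of the lengths of all connections: leave the first edge through one of
its endpoints, walk in `G`, and enter the second edge through one of its endpoints;
or, if both points lie on the same edge, travel directly along that edge. -/
noncomputable def pdist (G : SimpleGraph V) (ℓ : V → V → ℝ) (p q : V × V × ℝ) : ℝ :=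
  sInf ({x | ∃ (i j : Bool) (w : G.Walk (ept p i) (ept q j)),
        x = off ℓ p i + walkLen ℓ w + off ℓ q j}
    ∪ {x | (p.1, p.2.1) = (q.1, q.2.1) ∧ x = |p.2.2 - q.2.2|}
    ∪ {x | (p.1, p.2.1) = (q.2.1, q.1) ∧ x = |p.2.2 - (ℓ q.1 q.2.1 - q.2.2)|})

/-!
Both sides are computed in terms of the distances `d` between the ends of the two edges.
A closed walk through the edge `aa'` is the edge followed by a walk back from `a'` to `a`; if it
also passes the distinct edge `bb'`, that return walk splits at `bb'`. So a shortest such walk has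
length `ℓ(aa') + d(a',a)`, resp. `ℓ(aa') + ℓ(bb') + min (d(a,b') + d(a',b)) (d(a,b) + d(a',b'))`.
Swapping the names `b`, `b'` we may assume the first sum is the minimum. For points `p ∈ aa'`,
`q ∈ bb'`, the connections `p → a ⇝ b' → q` and `p → a' ⇝ b → q` (resp. the segment `pq` and the
way round the cycle) add up to exactly that length, so `d(p,q)` is at most half of it. Since
`d(·, x)` is `1`-Lipschitz along an edge, `p` and `q` can be placed so that these two connections
are equal and the remaining ones are no shorter, and then `d(p,q)` is exactly half.
-/

namespace SimpleGraph.Walk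

variable {G : SimpleGraph V}

theorem exists_eq_append_cons_of_mem_edges {x y : V} (w : G.Walk x y) {e : Sym2 V}
    (he : e ∈ w.edges) :
    ∃ (u v : V) (h : G.Adj u v) (w₁ : G.Walk x u) (w₂ : G.Walk v y),
      s(u, v) = e ∧ w = w₁.append (cons h w₂) := by
  induction w with
  | nil => simp at he
  | @cons x z y h w ih =>
    rw [edges_cons, List.mem_cons] at he
    by_cases hfirst : e = s(x, z)
    · exact ⟨x, z, h, nil, w, hfirst.symm, rfl⟩
    · obtain ⟨u, v, huv, w₁, w₂, rfl, rfl⟩ := ih (he.resolve_left hfirst)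
      exact ⟨u, v, huv, cons h w₁, w₂, rfl, rfl⟩

end SimpleGraph.Walk

section

variable {G : SimpleGraph V} {ℓ : V → V → ℝ}

@[simp]
lemma walkLen_nil {a : V} : walkLen ℓ (Walk.nil : G.Walk a a) = 0 := rfl

@[simp]
lemma walkLen_cons {a b c : V} (h : G.Adj a b) (w : G.Walk b c) :
    walkLen ℓ (Walk.cons h w) = ℓ a b + walkLen ℓ w := by
  simp [walkLen]

@[simp]
lemma walkLen_append {a b c : V} (w₁ : G.Walk a b) (w₂ : G.Walk b c) :
    walkLen ℓ (w₁.append w₂) = walkLen ℓ w₁ + walkLen ℓ w₂ := by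
  simp [walkLen, Walk.darts_append]

lemma walkLen_reverse (hsym : ∀ u v, ℓ u v = ℓ v u) {a b : V} (w : G.Walk a b) :
    walkLen ℓ w.reverse = walkLen ℓ w := by
  simp only [walkLen, Walk.darts_reverse, List.map_reverse, List.sum_reverse, List.map_map]
  exact congrArg List.sum (List.map_congr_left fun d _ => (hsym _ _).symm)

lemma walkLen_nonneg (hnn : ∀ u v, 0 ≤ ℓ u v) {a b : V} (w : G.Walk a b) :
    0 ≤ walkLen ℓ w :=
  List.sum_nonneg (by simp [hnn])

lemma exists_walk_of_mem_edges_of_closed (hsym : ∀ u v, ℓ u v = ℓ v u) {r a a' : V}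
    (w : G.Walk r r) (he : s(a, a') ∈ w.edges) :
    ∃ w' : G.Walk a' a, walkLen ℓ w = ℓ a a' + walkLen ℓ w' ∧
      ∀ e ∈ w.edges, e = s(a, a') ∨ e ∈ w'.edges := by
  obtain ⟨u, v, h, w₁, w₂, huv, rfl⟩ := w.exists_eq_append_cons_of_mem_edges he
  have hlen : walkLen ℓ (w₁.append (.cons h w₂)) = ℓ u v + walkLen ℓ (w₂.append w₁) := by
    simp only [walkLen_append, walkLen_cons]; ring
  have hedges : ∀ e ∈ (w₁.append (.cons h w₂)).edges, e = s(u, v) ∨ e ∈ (w₂.append w₁).edges := by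
    simp only [Walk.edges_append, Walk.edges_cons, List.mem_append, List.mem_cons]
    tauto
  rcases Sym2.eq_iff.mp huv with ⟨rfl, rfl⟩ | ⟨rfl, rfl⟩
  · exact ⟨w₂.append w₁, hlen, hedges⟩
  · refine ⟨(w₂.append w₁).reverse, by rw [hlen, walkLen_reverse hsym, hsym], fun e he ↦ ?_⟩
    rw [Walk.edges_reverse, List.mem_reverse, ← Sym2.eq_swap]
    exact hedges e he

lemma gdist_le_walkLen (hnn : ∀ u v, 0 ≤ ℓ u v) {a b : V} (w : G.Walk a b) :
    gdist G ℓ a b ≤ walkLen ℓ w :=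
  csInf_le ⟨0, by rintro _ ⟨w', rfl⟩; exact walkLen_nonneg hnn w'⟩ ⟨w, rfl⟩

lemma gdist_nonneg (hnn : ∀ u v, 0 ≤ ℓ u v) (a b : V) : 0 ≤ gdist G ℓ a b :=
  Real.sInf_nonneg (by rintro _ ⟨w, rfl⟩; exact walkLen_nonneg hnn w)

lemma gdist_comm (hsym : ∀ u v, ℓ u v = ℓ v u) (a b : V) : gdist G ℓ a b = gdist G ℓ b a := by
  have key : ∀ a b : V, {x | ∃ w : G.Walk a b, walkLen ℓ w = x} ⊆
      {x | ∃ w : G.Walk b a, walkLen ℓ w = x} := by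
    rintro a b _ ⟨w, rfl⟩
    exact ⟨w.reverse, walkLen_reverse hsym w⟩
  exact congrArg sInf ((key a b).antisymm (key b a))

lemma exists_walkLen_lt (hG : G.Connected) (a b : V) {ε : ℝ} (hε : 0 < ε) :
    ∃ w : G.Walk a b, walkLen ℓ w < gdist G ℓ a b + ε := by
  obtain ⟨_, ⟨w, rfl⟩, hw⟩ := exists_lt_of_csInf_lt (s := {x | ∃ w : G.Walk a b, walkLen ℓ w = x})
    ⟨_, (hG.preconnected a b).some, rfl⟩ (lt_add_of_pos_right _ hε)
  exact ⟨w, hw⟩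

lemma gdist_le_of_adj (hnn : ∀ u v, 0 ≤ ℓ u v) {u v : V} (h : G.Adj u v) :
    gdist G ℓ u v ≤ ℓ u v := by
  simpa using gdist_le_walkLen hnn (Walk.cons h Walk.nil)

lemma gdist_le_add_gdist_of_adj (hG : G.Connected) (hnn : ∀ u v, 0 ≤ ℓ u v) {u v : V}
    (h : G.Adj u v) (x : V) : gdist G ℓ u x ≤ ℓ u v + gdist G ℓ v x := by
  refine le_of_forall_pos_le_add fun ε hε ↦ ?_
  obtain ⟨w, hw⟩ := exists_walkLen_lt (ℓ := ℓ) hG v x hε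
  have := gdist_le_walkLen hnn (Walk.cons h w)
  rw [walkLen_cons] at this
  linarith

lemma abs_gdist_sub_gdist_le_of_adj (hG : G.Connected) (hsym : ∀ u v, ℓ u v = ℓ v u)
    (hnn : ∀ u v, 0 ≤ ℓ u v) {u v : V} (h : G.Adj u v) (x : V) :
    |gdist G ℓ u x - gdist G ℓ v x| ≤ ℓ u v := by
  have h₁ := gdist_le_add_gdist_of_adj hG hnn h x
  have h₂ := gdist_le_add_gdist_of_adj hG hnn h.symm x
  rw [hsym] at h₂
  exact abs_sub_le_iff.mpr ⟨by linarith, by linarith⟩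

lemma abs_gdist_sub_gdist_le_of_adj' (hG : G.Connected) (hsym : ∀ u v, ℓ u v = ℓ v u)
    (hnn : ∀ u v, 0 ≤ ℓ u v) {u v : V} (h : G.Adj u v) (x : V) :
    |gdist G ℓ x u - gdist G ℓ x v| ≤ ℓ u v := by
  rw [gdist_comm hsym x, gdist_comm hsym x]
  exact abs_gdist_sub_gdist_le_of_adj hG hsym hnn h x

lemma add_min_le_walkLen_of_mem_edges (hsym : ∀ u v, ℓ u v = ℓ v u) (hnn : ∀ u v, 0 ≤ ℓ u v)
    {x y u v : V} (w : G.Walk x y) (he : s(u, v) ∈ w.edges) :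
    ℓ u v + min (gdist G ℓ x u + gdist G ℓ v y) (gdist G ℓ x v + gdist G ℓ u y) ≤
      walkLen ℓ w := by
  obtain ⟨s, t, h, w₁, w₂, hst, rfl⟩ := w.exists_eq_append_cons_of_mem_edges he
  have h₁ := gdist_le_walkLen hnn w₁
  have h₂ := gdist_le_walkLen hnn w₂
  rw [walkLen_append, walkLen_cons]
  rcases Sym2.eq_iff.mp hst with ⟨rfl, rfl⟩ | ⟨rfl, rfl⟩
  · linarith [min_le_left (gdist G ℓ x s + gdist G ℓ t y) (gdist G ℓ x t + gdist G ℓ s y)]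
  · rw [hsym]
    linarith [min_le_right (gdist G ℓ x t + gdist G ℓ s y) (gdist G ℓ x s + gdist G ℓ t y)]

def closedWalkLengths (G : SimpleGraph V) (ℓ : V → V → ℝ) (e f : Sym2 V) : Set ℝ :=
  {x | ∃ (r : V) (w : G.Walk r r), e ∈ w.edges ∧ f ∈ w.edges ∧ walkLen ℓ w = x}

lemma sInf_closedWalkLengths_self (hG : G.Connected) (hsym : ∀ u v, ℓ u v = ℓ v u)
    (hnn : ∀ u v, 0 ≤ ℓ u v) {a a' : V} (ha : G.Adj a a') :
    sInf (closedWalkLengths G ℓ s(a, a') s(a, a')) = ℓ a a' + gdist G ℓ a' a := by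
  have hcycle : ∀ w : G.Walk a' a, ℓ a a' + walkLen ℓ w ∈ closedWalkLengths G ℓ s(a, a') s(a, a') :=
    fun w ↦ ⟨a, .cons ha w, by simp, by simp, walkLen_cons ha w⟩
  refine csInf_eq_of_forall_ge_of_forall_gt_exists_lt ⟨_, hcycle (hG.preconnected a' a).some⟩
    ?_ fun x hx ↦ ?_
  · rintro _ ⟨r, w, he, -, rfl⟩
    obtain ⟨w', hlen, -⟩ := exists_walk_of_mem_edges_of_closed hsym w he
    linarith [gdist_le_walkLen hnn w']
  · obtain ⟨w, hw⟩ := exists_walkLen_lt (ℓ := ℓ) hG a' a (sub_pos.mpr hx)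
    exact ⟨_, hcycle w, by linarith⟩

lemma sInf_closedWalkLengths_of_ne (hG : G.Connected) (hsym : ∀ u v, ℓ u v = ℓ v u)
    (hnn : ∀ u v, 0 ≤ ℓ u v) {a a' b b' : V} (ha : G.Adj a a') (hb : G.Adj b b')
    (hne : s(a, a') ≠ s(b, b'))
    (hle : gdist G ℓ a b' + gdist G ℓ a' b ≤ gdist G ℓ a b + gdist G ℓ a' b') :
    sInf (closedWalkLengths G ℓ s(a, a') s(b, b')) =
      ℓ a a' + ℓ b b' + gdist G ℓ a b' + gdist G ℓ a' b := by
  have hcycle : ∀ (w₁ : G.Walk a' b) (w₂ : G.Walk b' a),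
      ℓ a a' + ℓ b b' + walkLen ℓ w₁ + walkLen ℓ w₂ ∈ closedWalkLengths G ℓ s(a, a') s(b, b') :=
    fun w₁ w₂ ↦ ⟨a, .cons ha (w₁.append (.cons hb w₂)), by simp, by simp,
      by simp only [walkLen_cons, walkLen_append]; ring⟩
  refine csInf_eq_of_forall_ge_of_forall_gt_exists_lt
    ⟨_, hcycle (hG.preconnected a' b).some (hG.preconnected b' a).some⟩ ?_ fun x hx ↦ ?_
  · rintro _ ⟨r, w, hea, heb, rfl⟩
    obtain ⟨w', hlen, hedges⟩ := exists_walk_of_mem_edges_of_closed hsym w hea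
    have := add_min_le_walkLen_of_mem_edges hsym hnn w' ((hedges _ heb).resolve_left hne.symm)
    rw [gdist_comm hsym b' a, gdist_comm hsym b a] at this
    rw [min_eq_left (by linarith)] at this
    linarith
  · have hε : 0 < (x - (ℓ a a' + ℓ b b' + gdist G ℓ a b' + gdist G ℓ a' b)) / 2 := by linarith
    obtain ⟨w₁, hw₁⟩ := exists_walkLen_lt (ℓ := ℓ) hG a' b hε
    obtain ⟨w₂, hw₂⟩ := exists_walkLen_lt (ℓ := ℓ) hG b' a hε
    rw [gdist_comm hsym b' a] at hw₂
    exact ⟨_, hcycle w₁ w₂, by linarith⟩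

@[simp] lemma ept_false (p : V × V × ℝ) : ept p false = p.1 := rfl
@[simp] lemma ept_true (p : V × V × ℝ) : ept p true = p.2.1 := rfl
@[simp] lemma off_false (p : V × V × ℝ) : off ℓ p false = p.2.2 := rfl
@[simp] lemma off_true (p : V × V × ℝ) : off ℓ p true = ℓ p.1 p.2.1 - p.2.2 := rfl

def connectionLengths (G : SimpleGraph V) (ℓ : V → V → ℝ) (p q : V × V × ℝ) : Set ℝ :=
  {x | ∃ (i j : Bool) (w : G.Walk (ept p i) (ept q j)), x = off ℓ p i + walkLen ℓ w + off ℓ q j}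
    ∪ {x | (p.1, p.2.1) = (q.1, q.2.1) ∧ x = |p.2.2 - q.2.2|}
    ∪ {x | (p.1, p.2.1) = (q.2.1, q.1) ∧ x = |p.2.2 - (ℓ q.1 q.2.1 - q.2.2)|}

lemma pdist_eq_sInf (p q : V × V × ℝ) : pdist G ℓ p q = sInf (connectionLengths G ℓ p q) := rfl

lemma off_nonneg {p : V × V × ℝ} (hp : p.2.2 ∈ Set.Icc 0 (ℓ p.1 p.2.1)) (i : Bool) :
    0 ≤ off ℓ p i := by
  cases i <;> simp [hp.1, hp.2]

lemma pdist_le_of_mem (hnn : ∀ u v, 0 ≤ ℓ u v) {p q : V × V × ℝ}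
    (hp : p.2.2 ∈ Set.Icc 0 (ℓ p.1 p.2.1)) (hq : q.2.2 ∈ Set.Icc 0 (ℓ q.1 q.2.1)) {x : ℝ}
    (hx : x ∈ connectionLengths G ℓ p q) : pdist G ℓ p q ≤ x := by
  refine csInf_le ⟨0, ?_⟩ hx
  rintro _ ((⟨i, j, w, rfl⟩ | ⟨-, rfl⟩) | ⟨-, rfl⟩)
  · linarith [walkLen_nonneg hnn w, off_nonneg hp i, off_nonneg hq j]
  all_goals exact abs_nonneg _

lemma pdist_le_off_add_gdist_add_off (hG : G.Connected) (hnn : ∀ u v, 0 ≤ ℓ u v)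
    {p q : V × V × ℝ} (hp : p.2.2 ∈ Set.Icc 0 (ℓ p.1 p.2.1))
    (hq : q.2.2 ∈ Set.Icc 0 (ℓ q.1 q.2.1)) (i j : Bool) :
    pdist G ℓ p q ≤ off ℓ p i + gdist G ℓ (ept p i) (ept q j) + off ℓ q j := by
  refine le_of_forall_pos_le_add fun ε hε ↦ ?_
  obtain ⟨w, hw⟩ := exists_walkLen_lt (ℓ := ℓ) hG (ept p i) (ept q j) hε
  have := pdist_le_of_mem hnn hp hq (Or.inl (Or.inl ⟨i, j, w, rfl⟩))
  linarith

lemma le_pdist (hG : G.Connected) (hnn : ∀ u v, 0 ≤ ℓ u v) {p q : V × V × ℝ} {c : ℝ}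
    (hwalk : ∀ i j : Bool, c ≤ off ℓ p i + gdist G ℓ (ept p i) (ept q j) + off ℓ q j)
    (hsame : (p.1, p.2.1) = (q.1, q.2.1) → c ≤ |p.2.2 - q.2.2|)
    (hswap : (p.1, p.2.1) = (q.2.1, q.1) → c ≤ |p.2.2 - (ℓ q.1 q.2.1 - q.2.2)|) :
    c ≤ pdist G ℓ p q := by
  refine le_csInf ⟨_, Or.inl (Or.inl ⟨false, false, (hG.preconnected _ _).some, rfl⟩)⟩ ?_
  rintro _ ((⟨i, j, w, rfl⟩ | ⟨h, rfl⟩) | ⟨h, rfl⟩)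
  · linarith [hwalk i j, gdist_le_walkLen hnn w]
  · exact hsame h
  · exact hswap h

lemma pdist_flip (hsym : ∀ u v, ℓ u v = ℓ v u) (p : V × V × ℝ) (u v : V) (t : ℝ) :
    pdist G ℓ p (v, u, ℓ u v - t) = pdist G ℓ p (u, v, t) := by
  have hback : ℓ v u - (ℓ u v - t) = t := by rw [hsym]; ring
  simp only [pdist_eq_sInf]
  congr 1
  ext x
  simp only [connectionLengths, Set.mem_union, Set.mem_ofPred_eq, Bool.exists_bool, ept_false,
    ept_true, off_false, off_true, hback]
  tauto

def edgePointDists (G : SimpleGraph V) (ℓ : V → V → ℝ) (a a' b b' : V) : Set ℝ :=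
  {x | ∃ lam mu : ℝ, lam ∈ Set.Icc 0 (ℓ a a') ∧ mu ∈ Set.Icc 0 (ℓ b b') ∧
    pdist G ℓ (a, a', lam) (b, b', mu) = x}

lemma edgePointDists_swap (hsym : ∀ u v, ℓ u v = ℓ v u) (a a' b b' : V) :
    edgePointDists G ℓ a a' b' b = edgePointDists G ℓ a a' b b' := by
  have key : ∀ b b' : V, edgePointDists G ℓ a a' b' b ⊆ edgePointDists G ℓ a a' b b' := by
    rintro b b' _ ⟨lam, mu, hlam, ⟨hmu₀, hmu₁⟩, rfl⟩
    refine ⟨lam, ℓ b' b - mu, hlam, ⟨by linarith, by rw [hsym]; linarith⟩, ?_⟩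
    exact pdist_flip hsym _ b' b mu
  exact (key b b').antisymm (key b' b)

lemma isGreatest_edgePointDists_self (hG : G.Connected) (hsym : ∀ u v, ℓ u v = ℓ v u)
    (hnn : ∀ u v, 0 ≤ ℓ u v) {a a' : V} (ha : G.Adj a a') :
    IsGreatest (edgePointDists G ℓ a a' a a') ((ℓ a a' + gdist G ℓ a' a) / 2) := by
  have hD₀ := gdist_nonneg (G := G) hnn a' a
  have hDL : gdist G ℓ a' a ≤ ℓ a a' := hsym a a' ▸ gdist_le_of_adj hnn ha.symm
  have hcomm := gdist_comm (G := G) hsym a a'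
  have hupper : ∀ lam ∈ Set.Icc 0 (ℓ a a'), ∀ mu ∈ Set.Icc 0 (ℓ a a'),
      pdist G ℓ (a, a', lam) (a, a', mu) ≤ (ℓ a a' + gdist G ℓ a' a) / 2 := by
    intro lam hlam mu hmu
    have h₁ : pdist G ℓ (a, a', lam) (a, a', mu) ≤ |lam - mu| :=
      pdist_le_of_mem hnn hlam hmu (Or.inl (Or.inr ⟨rfl, rfl⟩))
    have h₂ : pdist G ℓ (a, a', lam) (a, a', mu) ≤ lam + gdist G ℓ a a' + (ℓ a a' - mu) :=
      pdist_le_off_add_gdist_add_off hG hnn hlam hmu false true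
    have h₃ : pdist G ℓ (a, a', lam) (a, a', mu) ≤ (ℓ a a' - lam) + gdist G ℓ a' a + mu :=
      pdist_le_off_add_gdist_add_off hG hnn hlam hmu true false
    rcases abs_cases (lam - mu) with ⟨habs, -⟩ | ⟨habs, -⟩ <;> linarith
  -- Points at distance `(ℓ a a' - gdist a' a) / 4` from opposite ends of the edge cut the
  -- cycle formed by the edge and a shortest path `a' ⇝ a` into two halves.
  have hlam : (ℓ a a' - gdist G ℓ a' a) / 4 ∈ Set.Icc 0 (ℓ a a') := ⟨by linarith, by linarith⟩
  have hmu : (3 * ℓ a a' + gdist G ℓ a' a) / 4 ∈ Set.Icc 0 (ℓ a a') := ⟨by linarith, by linarith⟩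
  have habs : |(ℓ a a' - gdist G ℓ a' a) / 4 - (3 * ℓ a a' + gdist G ℓ a' a) / 4| =
      (ℓ a a' + gdist G ℓ a' a) / 2 := by
    rw [abs_of_nonpos (by linarith)]; ring
  refine ⟨⟨_, _, hlam, hmu, le_antisymm (hupper _ hlam _ hmu) (le_pdist hG hnn ?_ ?_ ?_)⟩,
    fun _ ⟨lam, mu, hlam, hmu, hx⟩ ↦ hx ▸ hupper lam hlam mu hmu⟩
  · rintro (_ | _) (_ | _) <;> simp only [ept_false, ept_true, off_false, off_true] <;>
      linarith [gdist_nonneg (G := G) hnn a a, gdist_nonneg (G := G) hnn a' a']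
  · exact fun _ ↦ habs.ge
  · intro h
    exact absurd (Prod.ext_iff.mp h).1 ha.ne

lemma exists_mem_Icc_le_four_sums {L₁ L₂ d₁₁ d₁₂ d₂₁ d₂₂ : ℝ}
    (h₁ : |d₁₁ - d₂₁| ≤ L₁) (h₂ : |d₁₂ - d₂₂| ≤ L₁) (h₃ : |d₁₁ - d₁₂| ≤ L₂)
    (h₄ : |d₂₁ - d₂₂| ≤ L₂) (hle : d₁₂ + d₂₁ ≤ d₁₁ + d₂₂) :
    ∃ lam ∈ Set.Icc 0 L₁, ∃ mu ∈ Set.Icc 0 L₂,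
      (L₁ + L₂ + d₁₂ + d₂₁) / 2 ≤ lam + d₁₁ + mu ∧
      (L₁ + L₂ + d₁₂ + d₂₁) / 2 ≤ lam + d₁₂ + (L₂ - mu) ∧
      (L₁ + L₂ + d₁₂ + d₂₁) / 2 ≤ (L₁ - lam) + d₂₁ + mu ∧
      (L₁ + L₂ + d₁₂ + d₂₁) / 2 ≤ (L₁ - lam) + d₂₂ + (L₂ - mu) := by
  obtain ⟨h₁, h₁'⟩ := abs_sub_le_iff.mp h₁
  obtain ⟨h₂, h₂'⟩ := abs_sub_le_iff.mp h₂
  obtain ⟨h₃, h₃'⟩ := abs_sub_le_iff.mp h₃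
  obtain ⟨h₄, h₄'⟩ := abs_sub_le_iff.mp h₄
  obtain ⟨mu, hmu₀, hmu₁, hmu⟩ : ∃ mu, 0 ≤ mu ∧ (L₂ + d₁₂ - d₁₁) / 2 ≤ mu ∧
      (mu = 0 ∨ mu = (L₂ + d₁₂ - d₁₁) / 2) :=
    ⟨_, le_max_left _ _, le_max_right _ _, max_choice _ _⟩
  -- `lam - mu` is fixed by making the sums through `d₁₂` and `d₂₁` equal; `mu` is then the
  -- least value keeping the sum through `d₁₁` large enough.
  refine ⟨mu + (L₁ - L₂ + d₂₁ - d₁₂) / 2, ⟨?_, ?_⟩, mu, ⟨hmu₀, ?_⟩,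
    ?_, by linarith, by linarith, ?_⟩ <;> rcases hmu with rfl | rfl <;> linarith

lemma isGreatest_edgePointDists_of_ne (hG : G.Connected) (hsym : ∀ u v, ℓ u v = ℓ v u)
    (hnn : ∀ u v, 0 ≤ ℓ u v) {a a' b b' : V} (ha : G.Adj a a') (hb : G.Adj b b')
    (hne : s(a, a') ≠ s(b, b'))
    (hle : gdist G ℓ a b' + gdist G ℓ a' b ≤ gdist G ℓ a b + gdist G ℓ a' b') :
    IsGreatest (edgePointDists G ℓ a a' b b')
      ((ℓ a a' + ℓ b b' + gdist G ℓ a b' + gdist G ℓ a' b) / 2) := by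
  have hupper : ∀ lam ∈ Set.Icc 0 (ℓ a a'), ∀ mu ∈ Set.Icc 0 (ℓ b b'),
      pdist G ℓ (a, a', lam) (b, b', mu) ≤
        (ℓ a a' + ℓ b b' + gdist G ℓ a b' + gdist G ℓ a' b) / 2 := by
    intro lam hlam mu hmu
    have h₁ : pdist G ℓ (a, a', lam) (b, b', mu) ≤ lam + gdist G ℓ a b' + (ℓ b b' - mu) :=
      pdist_le_off_add_gdist_add_off hG hnn hlam hmu false true
    have h₂ : pdist G ℓ (a, a', lam) (b, b', mu) ≤ (ℓ a a' - lam) + gdist G ℓ a' b + mu :=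
      pdist_le_off_add_gdist_add_off hG hnn hlam hmu true false
    linarith
  obtain ⟨lam, hlam, mu, hmu, h₁₁, h₁₂, h₂₁, h₂₂⟩ := exists_mem_Icc_le_four_sums
    (abs_gdist_sub_gdist_le_of_adj hG hsym hnn ha b)
    (abs_gdist_sub_gdist_le_of_adj hG hsym hnn ha b')
    (abs_gdist_sub_gdist_le_of_adj' hG hsym hnn hb a)
    (abs_gdist_sub_gdist_le_of_adj' hG hsym hnn hb a') hle
  refine ⟨⟨lam, mu, hlam, hmu, le_antisymm (hupper lam hlam mu hmu) (le_pdist hG hnn ?_ ?_ ?_)⟩,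
    fun _ ⟨lam, mu, hlam, hmu, hx⟩ ↦ hx ▸ hupper lam hlam mu hmu⟩
  · rintro (_ | _) (_ | _) <;> assumption
  · intro h
    obtain ⟨rfl, rfl⟩ := Prod.ext_iff.mp h
    exact absurd rfl hne
  · intro h
    obtain ⟨rfl, rfl⟩ := Prod.ext_iff.mp h
    exact absurd Sym2.eq_swap hne

end

/-- For edges `aa'` and `bb'` of a connected weighted graph `G` with nonnegative edge
lengths, the maximum over points `p` on edge `aa'` and `q` on edge `bb'` of the
continuous distance `d_𝒢(p,q)` equals `ℓ(W(aa',bb'))/2`, where `W(aa',bb')` is a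
shortest closed walk passing through all interior points of `aa'` and `bb'`
(i.e. traversing each of the two edges in full at least once). -/
theorem max_dist_eq_half_closed_walk (G : SimpleGraph V) (hG : G.Connected)
    (ℓ : V → V → ℝ) (hsym : ∀ u v, ℓ u v = ℓ v u) (hnn : ∀ u v, 0 ≤ ℓ u v)
    (a a' b b' : V) (ha : G.Adj a a') (hb : G.Adj b b') :
    sSup {x | ∃ lam mu : ℝ, lam ∈ Set.Icc 0 (ℓ a a') ∧ mu ∈ Set.Icc 0 (ℓ b b') ∧
        pdist G ℓ (a, a', lam) (b, b', mu) = x}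
    = (sInf {x | ∃ (r : V) (w : G.Walk r r),
        s(a, a') ∈ w.edges ∧ s(b, b') ∈ w.edges ∧ walkLen ℓ w = x}) / 2 := by
  change sSup (edgePointDists G ℓ a a' b b') = sInf (closedWalkLengths G ℓ s(a, a') s(b, b')) / 2
  wlog horient : (b, b') = (a, a') ∨ s(a, a') ≠ s(b, b') ∧
      gdist G ℓ a b' + gdist G ℓ a' b ≤ gdist G ℓ a b + gdist G ℓ a' b' generalizing b b'
  · rw [← edgePointDists_swap hsym, Sym2.eq_swap (a := b)]
    refine this b' b hb.symm ?_
    by_cases hsame : s(a, a') = s(b, b')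
    · left
      rcases Sym2.eq_iff.mp hsame with ⟨rfl, rfl⟩ | ⟨rfl, rfl⟩
      · exact absurd (Or.inl rfl) horient
      · rfl
    · right
      refine ⟨by rwa [Sym2.eq_swap (a := b')], ?_⟩
      have := not_and.mp ((not_or.mp horient).2) hsame
      linarith
  rcases horient with hsame | ⟨hne, hle⟩
  · obtain ⟨rfl, rfl⟩ := Prod.ext_iff.mp hsame
    rw [(isGreatest_edgePointDists_self hG hsym hnn ha).csSup_eq,
      sInf_closedWalkLengths_self hG hsym hnn ha]
  · rw [(isGreatest_edgePointDists_of_ne hG hsym hnn ha hb hne hle).csSup_eq,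
      sInf_closedWalkLengths_of_ne hG hsym hnn ha hb hne hle]
end

section
/- The function ξ(y,z,x00,x01,x10,x11) = ∫₀^y ∫₀^z min{ x00+λ+μ, x01+λ+z−μ, x10+y−λ+μ, x11+y−λ+z−μ } dμ dλ agrees with a polynomial of degree at most 3 in (y,z,x00,x01,x10,x11) on the set of compliant tuples satisfying x10 + x01 − x00 − x11 ≥ 0, and with a (possibly different) polynomial of degree at most 3 on the set of compliant tuples with x10 + x01 − x00 − x11 < 0. -/
/-!
For a point at position `λ` on `a₀a₁`, let `A λ` and `B λ` be its distances to `b₀` and `b₁`.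
The inner integrand of `ξ` is `min (A λ + μ) (B λ + (z - μ))`, a "tent" in `μ`, whose integral
over `[0, z]` is `z (A + B) / 2 + z² / 4 - (A - B)² / 4` as soon as `|A - B| ≤ z`, which
compliance guarantees. Now `A` and `B` are tents in `λ` themselves, with kinks at
`p = (x10 - x00 + y) / 2` and `q = (x11 - x01 + y) / 2`. When `x10 + x01 - x00 - x11 ≥ 0` we have
`q ≤ p`, and `A - B` is constant on `[0, q]`, linear of slope `2` on `[q, p]` and constant on
`[p, y]`; so every piece integrates to a cubic. Reflecting `μ ↦ z - μ` exchanges `b₀` and `b₁`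
and flips the sign of `x10 + x01 - x00 - x11`, which gives the other case.
-/

/-- The 6-tuple `(y,z,x00,x01,x10,x11)` is *compliant*: `y,z > 0`, the `x`'s are
nonnegative, and each `x_{αβ}` equals the shortest-path distance `d_K(a_α,b_β)` in the
weighted complete graph on `{a0,a1,b0,b1}` with `ℓ(a0a1)=y`, `ℓ(b0b1)=z`,
`ℓ(a_α b_β)=x_{αβ}`; equivalently, the triangle-type inequalities hold. -/
def Compliant (y z x00 x01 x10 x11 : ℝ) : Prop :=
  0 < y ∧ 0 < z ∧ 0 ≤ x00 ∧ 0 ≤ x01 ∧ 0 ≤ x10 ∧ 0 ≤ x11 ∧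
  x00 ≤ x10 + y ∧ x10 ≤ x00 + y ∧ x01 ≤ x11 + y ∧ x11 ≤ x01 + y ∧
  x00 ≤ x01 + z ∧ x01 ≤ x00 + z ∧ x10 ≤ x11 + z ∧ x11 ≤ x10 + z

/-- The total sum of distances between the points of edge `a0a1` and the points of
edge `b0b1` of the continuous graph: the double integral of the lower envelope of the
four candidate path lengths. -/
noncomputable def xi (y z x00 x01 x10 x11 : ℝ) : ℝ :=
  ∫ lam in (0:ℝ)..y, ∫ mu in (0:ℝ)..z,
    min (min (x00 + lam + mu) (x01 + lam + (z - mu)))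
        (min (x10 + (y - lam) + mu) (x11 + (y - lam) + (z - mu)))

open MvPolynomial intervalIntegral Set

theorem integral_quadratic (c₀ c₁ c₂ u v : ℝ) :
    ∫ t in u..v, (c₀ + c₁ * t + c₂ * t ^ 2)
      = c₀ * (v - u) + c₁ * (v ^ 2 - u ^ 2) / 2 + c₂ * (v ^ 3 - u ^ 3) / 3 := by
  rw [integral_add (Continuous.intervalIntegrable (by fun_prop) _ _)
      (Continuous.intervalIntegrable (by fun_prop) _ _),
    integral_add intervalIntegrable_const (Continuous.intervalIntegrable (by fun_prop) _ _),
    integral_const_mul, integral_const_mul]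
  simp only [integral_const, smul_eq_mul, integral_id, integral_pow]
  ring

theorem integral_linear (α β u v : ℝ) :
    ∫ t in u..v, (α + β * t) = (v - u) * (α + β * (u + v) / 2) := by
  have h := integral_quadratic α β 0 u v
  simp only [zero_mul, add_zero] at h
  rw [h]
  ring

theorem integral_linear_sq (α β u v : ℝ) :
    ∫ t in u..v, (α + β * t) ^ 2
      = (v - u) * ((α + β * u) ^ 2 + (α + β * u) * (α + β * v) + (α + β * v) ^ 2) / 3 := by
  have h (t : ℝ) : (α + β * t) ^ 2 = α ^ 2 + 2 * α * β * t + β ^ 2 * t ^ 2 := by ring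
  simp only [h, integral_quadratic]
  ring

/-- Distance from the point at position `t` of an edge of length `ℓ` to a vertex lying at
distance `a` from the start and `b` from the end of the edge. -/
def edgeDist (a b ℓ t : ℝ) : ℝ := min (a + t) (b + (ℓ - t))

section edgeDist

variable {a b ℓ t : ℝ}

@[fun_prop]
theorem continuous_edgeDist (a b ℓ : ℝ) : Continuous (edgeDist a b ℓ) := by
  unfold edgeDist; fun_prop

theorem edgeDist_of_le (h : t ≤ (b - a + ℓ) / 2) : edgeDist a b ℓ t = a + t :=
  min_eq_left (by linarith)

theorem edgeDist_of_ge (h : (b - a + ℓ) / 2 ≤ t) : edgeDist a b ℓ t = b + ℓ - t :=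
  (min_eq_right (by linarith)).trans (by ring)

theorem edgeDist_reflect (a b ℓ t : ℝ) : edgeDist a b ℓ (ℓ - t) = edgeDist b a ℓ t := by
  rw [edgeDist, edgeDist, min_comm]; ring_nf

theorem abs_edgeDist_sub_edgeDist_le (a b a' b' ℓ t : ℝ) :
    |edgeDist a b ℓ t - edgeDist a' b' ℓ t| ≤ max |a - a'| |b - b'| := by
  simpa [edgeDist] using abs_min_sub_min_le_max (a + t) (b + (ℓ - t)) (a' + t) (b' + (ℓ - t))

end edgeDist

theorem integral_edgeDist {a b ℓ : ℝ} (h : |a - b| ≤ ℓ) :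
    ∫ t in (0:ℝ)..ℓ, edgeDist a b ℓ t = ℓ * (a + b) / 2 + ℓ ^ 2 / 4 - (a - b) ^ 2 / 4 := by
  obtain ⟨h₁, h₂⟩ := abs_le.mp h
  set m := (b - a + ℓ) / 2 with hm
  have hm₀ : 0 ≤ m := by linarith
  have hmℓ : m ≤ ℓ := by linarith
  have hint := (continuous_edgeDist a b ℓ).intervalIntegrable (μ := MeasureTheory.volume)
  have e₁ : ∫ t in (0:ℝ)..m, edgeDist a b ℓ t = ∫ t in (0:ℝ)..m, (a + 1 * t) :=
    integral_congr fun t ht => by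
      rw [uIcc_of_le hm₀] at ht
      rw [edgeDist_of_le ht.2, one_mul]
  have e₂ : ∫ t in m..ℓ, edgeDist a b ℓ t = ∫ t in m..ℓ, (b + ℓ + -1 * t) :=
    integral_congr fun t ht => by
      rw [uIcc_of_le hmℓ] at ht
      rw [edgeDist_of_ge ht.1]; ring
  rw [← integral_add_adjacent_intervals (hint 0 m) (hint m ℓ), e₁, e₂, integral_linear,
    integral_linear]
  ring

theorem integral_sq_edgeDist_sub_edgeDist {a b c d ℓ : ℝ} (hq : b - d ≤ ℓ)
    (hqp : d - b ≤ c - a) (hp : c - a ≤ ℓ) :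
    ∫ t in (0:ℝ)..ℓ, (edgeDist a c ℓ t - edgeDist b d ℓ t) ^ 2
      = (d - b + ℓ) / 2 * (a - b) ^ 2
        + (c - a - (d - b)) / 2 * ((a - b) ^ 2 + (a - b) * (c - d) + (c - d) ^ 2) / 3
        + (a - c + ℓ) / 2 * (c - d) ^ 2 := by
  set q := (d - b + ℓ) / 2 with hq_def
  set p := (c - a + ℓ) / 2 with hp_def
  have hq₀ : 0 ≤ q := by linarith
  have hqp' : q ≤ p := by linarith
  have hpℓ : p ≤ ℓ := by linarith
  have hint := (show Continuous fun t => (edgeDist a c ℓ t - edgeDist b d ℓ t) ^ 2 by fun_prop)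
    |>.intervalIntegrable (μ := MeasureTheory.volume)
  have e₁ : ∫ t in (0:ℝ)..q, (edgeDist a c ℓ t - edgeDist b d ℓ t) ^ 2
      = ∫ _ in (0:ℝ)..q, (a - b) ^ 2 :=
    integral_congr fun t ht => by
      rw [uIcc_of_le hq₀] at ht
      rw [edgeDist_of_le (ht.2.trans hqp'), edgeDist_of_le ht.2]; ring
  have e₂ : ∫ t in q..p, (edgeDist a c ℓ t - edgeDist b d ℓ t) ^ 2
      = ∫ t in q..p, (a - d - ℓ + 2 * t) ^ 2 :=
    integral_congr fun t ht => by
      rw [uIcc_of_le hqp'] at ht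
      rw [edgeDist_of_le ht.2, edgeDist_of_ge ht.1]; ring
  have e₃ : ∫ t in p..ℓ, (edgeDist a c ℓ t - edgeDist b d ℓ t) ^ 2
      = ∫ _ in p..ℓ, (c - d) ^ 2 :=
    integral_congr fun t ht => by
      rw [uIcc_of_le hpℓ] at ht
      rw [edgeDist_of_ge ht.1, edgeDist_of_ge (hqp'.trans ht.1)]; ring
  rw [← integral_add_adjacent_intervals (hint 0 q) (hint q ℓ),
    ← integral_add_adjacent_intervals (hint q p) (hint p ℓ), e₁, e₂, e₃, integral_const,
    integral_const, integral_linear_sq, smul_eq_mul, smul_eq_mul]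
  ring

theorem xi_eq_integral_edgeDist (y z x00 x01 x10 x11 : ℝ) :
    xi y z x00 x01 x10 x11 = ∫ s in (0:ℝ)..y, ∫ t in (0:ℝ)..z,
      edgeDist (edgeDist x00 x10 y s) (edgeDist x01 x11 y s) z t := by
  refine integral_congr fun s _ => integral_congr fun t _ => ?_
  simp only [edgeDist]
  rw [← min_add_add_right, ← min_add_add_right, min_min_min_comm]

theorem xi_swap (y z x00 x01 x10 x11 : ℝ) :
    xi y z x01 x00 x11 x10 = xi y z x00 x01 x10 x11 := by
  simp only [xi_eq_integral_edgeDist]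
  refine integral_congr fun s _ => ?_
  simp only [← edgeDist_reflect (edgeDist x00 x10 y s)]
  rw [integral_comp_sub_left (edgeDist _ _ z), sub_self, sub_zero]

theorem Compliant.swap {y z x00 x01 x10 x11 : ℝ} (h : Compliant y z x00 x01 x10 x11) :
    Compliant y z x01 x00 x11 x10 := by
  obtain ⟨hy, hz, h00, h01, h10, h11, h₁, h₂, h₃, h₄, h₅, h₆, h₇, h₈⟩ := h
  exact ⟨hy, hz, h01, h00, h11, h10, h₃, h₄, h₁, h₂, h₆, h₅, h₈, h₇⟩

theorem xi_eq_integral {y z x00 x01 x10 x11 : ℝ} (h : Compliant y z x00 x01 x10 x11) :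
    xi y z x00 x01 x10 x11 = ∫ s in (0:ℝ)..y,
      (z / 2 * (edgeDist x00 x10 y s + edgeDist x01 x11 y s) + z ^ 2 / 4
        - (edgeDist x00 x10 y s - edgeDist x01 x11 y s) ^ 2 / 4) := by
  obtain ⟨-, -, -, -, -, -, -, -, -, -, h₅, h₆, h₇, h₈⟩ := h
  rw [xi_eq_integral_edgeDist]
  refine integral_congr fun s _ => ?_
  have hz : |edgeDist x00 x10 y s - edgeDist x01 x11 y s| ≤ z :=
    (abs_edgeDist_sub_edgeDist_le _ _ _ _ _ _).trans
      (max_le (abs_le.mpr ⟨by linarith, by linarith⟩) (abs_le.mpr ⟨by linarith, by linarith⟩))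
  simp only [integral_edgeDist hz]
  ring

/-- Expanded form of `z / 2 * (T x00 x10 + T x01 x11) + y * z ^ 2 / 4 - S / 4`, where `T a b` is
`integral_edgeDist` for `edgeDist a b y` and `S` is `integral_sq_edgeDist_sub_edgeDist`. -/
noncomputable def xiPoly : MvPolynomial (Fin 6) ℝ :=
  let y := X 0; let z := X 1; let x00 := X 2; let x01 := X 3; let x10 := X 4; let x11 := X 5
  C (1 / 4) * z * y * (x00 + x10 + x01 + x11) + C (1 / 4) * z * y * y
    - C (1 / 8) * z * (x00 - x10) * (x00 - x10) - C (1 / 8) * z * (x01 - x11) * (x01 - x11)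
    + C (1 / 4) * y * z * z
    - C (1 / 8) * (x11 - x01 + y) * (x00 - x01) * (x00 - x01)
    - C (1 / 24) * (x10 - x00 - x11 + x01) * (x00 - x01) * (x00 - x01)
    - C (1 / 24) * (x10 - x00 - x11 + x01) * (x00 - x01) * (x10 - x11)
    - C (1 / 24) * (x10 - x00 - x11 + x01) * (x10 - x11) * (x10 - x11)
    - C (1 / 8) * (x00 - x10 + y) * (x10 - x11) * (x10 - x11)

theorem MvPolynomial.IsHomogeneous.mul_mul {σ R : Type*} [CommSemiring R]
    {φ ψ χ : MvPolynomial σ R} (hφ : φ.IsHomogeneous 1) (hψ : ψ.IsHomogeneous 1)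
    (hχ : χ.IsHomogeneous 1) : (φ * ψ * χ).IsHomogeneous 3 :=
  (hφ.mul hψ).mul hχ

theorem isHomogeneous_xiPoly : xiPoly.IsHomogeneous 3 := by
  unfold xiPoly
  repeat' with_reducible_and_instances first
    | refine IsHomogeneous.add ?_ ?_
    | refine IsHomogeneous.sub ?_ ?_
    | refine IsHomogeneous.mul_mul ?_ ?_ ?_
    | refine IsHomogeneous.C_mul ?_ _
    | exact isHomogeneous_X _ _

theorem xi_eq_eval_xiPoly {y z x00 x01 x10 x11 : ℝ} (h : Compliant y z x00 x01 x10 x11)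
    (hs : 0 ≤ x10 + x01 - x00 - x11) :
    xi y z x00 x01 x10 x11 = eval ![y, z, x00, x01, x10, x11] xiPoly := by
  rw [xi_eq_integral h]
  obtain ⟨-, -, -, -, -, -, h₁, h₂, h₃, h₄, -, -, -, -⟩ := h
  rw [integral_sub, integral_add, integral_const_mul, integral_add,
    integral_const, integral_div, integral_edgeDist, integral_edgeDist,
    integral_sq_edgeDist_sub_edgeDist]
  · simp only [xiPoly, map_sub, map_add, map_mul, eval_C, eval_X, Matrix.cons_val,
      Matrix.cons_val_zero, Matrix.cons_val_one, smul_eq_mul]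
    ring
  all_goals first
    | linarith
    | exact abs_le.mpr ⟨by linarith, by linarith⟩
    | exact Continuous.intervalIntegrable (by fun_prop) _ _

/-- `ξ` agrees with a polynomial of degree at most `3` in the six variables on the set
of compliant tuples with `x10 + x01 − x00 − x11 ≥ 0`, and with a (possibly different)
polynomial of degree at most `3` on the set of compliant tuples with
`x10 + x01 − x00 − x11 < 0`. -/
theorem xi_piecewise_polynomial :
    ∃ P Q : MvPolynomial (Fin 6) ℝ, P.totalDegree ≤ 3 ∧ Q.totalDegree ≤ 3 ∧
      ∀ y z x00 x01 x10 x11 : ℝ, Compliant y z x00 x01 x10 x11 →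
        (0 ≤ x10 + x01 - x00 - x11 →
          xi y z x00 x01 x10 x11 = MvPolynomial.eval ![y, z, x00, x01, x10, x11] P) ∧
        (x10 + x01 - x00 - x11 < 0 →
          xi y z x00 x01 x10 x11 = MvPolynomial.eval ![y, z, x00, x01, x10, x11] Q) := by
  -- `Q` is `xiPoly` with `b₀` and `b₁` exchanged, i.e. `x00 ↔ x01` and `x10 ↔ x11`.
  refine ⟨xiPoly, rename (![0, 1, 3, 2, 5, 4] : Fin 6 → Fin 6) xiPoly,
    isHomogeneous_xiPoly.totalDegree_le,
    (totalDegree_rename_le _ _).trans isHomogeneous_xiPoly.totalDegree_le,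
    fun y z x00 x01 x10 x11 h => ⟨xi_eq_eval_xiPoly h, fun hs => ?_⟩⟩
  have hswap :
      ![y, z, x00, x01, x10, x11] ∘ ![0, 1, 3, 2, 5, 4] = ![y, z, x01, x00, x11, x10] := by
    ext i; fin_cases i <;> rfl
  rw [eval_rename, hswap, ← xi_eq_eval_xiPoly h.swap (by linarith), xi_swap]
end

section
/- Let 𝒦 be the continuous graph on vertices {a0,a1,b0,b1} as above with compliant lengths, and suppose L = x10 + x01 − x00 − x11 ≥ 0. Then max over λ∈[0,y], μ∈[0,z] of min{ x00+λ+μ, x01+λ+z−μ, x10+y−λ+μ, x11+y−λ+z−μ } equals ( y + z + x00 + x11 ) / 2. -/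
/-- If `L = x10 + x01 − x00 − x11 ≥ 0`, then the maximum over `λ ∈ [0,y]`, `μ ∈ [0,z]`
of `min{x00+λ+μ, x01+λ+z−μ, x10+y−λ+μ, x11+y−λ+z−μ}` (the maximum distance between a
point on edge `a0a1` and a point on edge `b0b1` of the continuous graph `𝒦`) equals
`(y + z + x00 + x11)/2`. -/
theorem max_roof_value (y z x00 x01 x10 x11 : ℝ)
    (hc : Compliant y z x00 x01 x10 x11)
    (hL : 0 ≤ x10 + x01 - x00 - x11) :
    IsGreatest {v : ℝ | ∃ lam ∈ Set.Icc (0:ℝ) y, ∃ mu ∈ Set.Icc (0:ℝ) z,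
        v = min (min (x00 + lam + mu) (x01 + lam + (z - mu)))
                (min (x10 + (y - lam) + mu) (x11 + (y - lam) + (z - mu)))}
      ((y + z + x00 + x11) / 2) := by
  obtain ⟨hy, hz, h00, h01, h10, h11, t1, t2, t3, t4, t5, t6, t7, t8⟩ := hc
  constructor
  · set T : ℝ := (y + z + x11 - x00) / 2 with hT
    set A : ℝ := (y - z + x00 + x11) / 2 - x01 with hA
    set B : ℝ := x10 + (y - z - x00 - x11) / 2 with hB
    set D : ℝ := max A (max (-T) (T - 2 * z)) with hD
    have hDgeA : A ≤ D := le_max_left _ _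
    have hDgemT : -T ≤ D := le_trans (le_max_left _ _) (le_max_right _ _)
    have hDgeT2z : T - 2 * z ≤ D := le_trans (le_max_right _ _) (le_max_right _ _)
    have hDleB : D ≤ B := by
      apply max_le (by simp only [hA, hB]; linarith)
      apply max_le (by simp only [hT, hB]; linarith) (by simp only [hT, hB]; linarith)
    have hDle2yT : D ≤ 2 * y - T := by
      apply max_le (by simp only [hA, hT]; linarith)
      apply max_le (by simp only [hT]; linarith) (by simp only [hT]; linarith)
    have hDleT : D ≤ T := by
      apply max_le (by simp only [hA, hT]; linarith)
      apply max_le (by simp only [hT]; linarith) (by simp only [hT]; linarith)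
    refine ⟨(T + D) / 2, ⟨by linarith, by linarith⟩, (T - D) / 2, ⟨by linarith, by linarith⟩, ?_⟩
    have e1 : x00 + (T + D) / 2 + (T - D) / 2 = (y + z + x00 + x11) / 2 := by
      simp only [hT]; ring
    have e4 : x11 + (y - (T + D) / 2) + (z - (T - D) / 2) = (y + z + x00 + x11) / 2 := by
      simp only [hT]; ring
    have e2 : (y + z + x00 + x11) / 2 ≤ x01 + (T + D) / 2 + (z - (T - D) / 2) := by
      simp only [hT] at hDgeA ⊢; simp only [hA] at hDgeA; linarith
    have e3 : (y + z + x00 + x11) / 2 ≤ x10 + (y - (T + D) / 2) + (T - D) / 2 := by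
      simp only [hT] at hDleB ⊢; simp only [hB] at hDleB; linarith
    have m12 : min (x00 + (T + D) / 2 + (T - D) / 2)
        (x01 + (T + D) / 2 + (z - (T - D) / 2)) = (y + z + x00 + x11) / 2 := by
      rw [min_eq_left (by rw [e1]; exact e2), e1]
    have m34 : min (x10 + (y - (T + D) / 2) + (T - D) / 2)
        (x11 + (y - (T + D) / 2) + (z - (T - D) / 2)) = (y + z + x00 + x11) / 2 := by
      rw [min_eq_right (by rw [e4]; exact e3), e4]
    rw [m12, m34, min_self]
  · rintro v ⟨lam, ⟨hl0, hl1⟩, mu, ⟨hm0, hm1⟩, rfl⟩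
    have h1 : min (min (x00 + lam + mu) (x01 + lam + (z - mu)))
        (min (x10 + (y - lam) + mu) (x11 + (y - lam) + (z - mu))) ≤ x00 + lam + mu :=
      le_trans (min_le_left _ _) (min_le_left _ _)
    have h2 : min (min (x00 + lam + mu) (x01 + lam + (z - mu)))
        (min (x10 + (y - lam) + mu) (x11 + (y - lam) + (z - mu)))
        ≤ x11 + (y - lam) + (z - mu) :=
      le_trans (min_le_right _ _) (min_le_right _ _)
    linarith
end
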